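/- arXiv:2506.00372 — 2 statements merged into one kernel-verified Lean document; each statement's English description precedes it below -/
import Mathlib

section
/- Assume the outside option setup (𝒜_N = {a₀}), the full domain 𝒟 = 2^𝒜 ∖ {∅}, and |𝒳| ≥ |𝒜_A| + n. For any integer n ≥ 2 and any sequence (≻_i, 𝓔_i)_{i=1}^{n−1} of linear orders ≻_i on 𝒜 and collections 𝓔_i ⊆ 𝒟, every convex combination of ρ^{≻_1}_{𝓔_1}, …, ρ^{≻_{n−1}}_{𝓔_{n−1}} belongs to RU(n). -/
open Finset

noncomputable section

/-- A ranking (strict linear order) on a finite type `T`, encoded as a bijection with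
`Fin (Fintype.card T)`; a lower index means a better alternative. -/
abbrev Ranking (T : Type) [Fintype T] : Type := T ≃ Fin (Fintype.card T)

/-- `x` is strictly preferred to `y` according to the ranking `r`. -/
def Ranking.pref {T : Type} [Fintype T] (r : Ranking T) (x y : T) : Prop :=
  r x < r y

/-- The `r`-best (most preferred) element of a nonempty finite set `D`. -/
def Ranking.best {T : Type} [Fintype T] [DecidableEq T] (r : Ranking T) (D : Finset T)
    (hD : D.Nonempty) : T :=
  r.symm ((D.image fun x => r x).min' (hD.image fun x => r x))

/-- `μ` is a probability distribution on the finite type `T`. -/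
def IsDistr {T : Type} [Fintype T] (μ : T → ℝ) : Prop :=
  (∀ t, 0 ≤ μ t) ∧ (∑ t, μ t) = 1

open Classical in
/-- The probability of the event `P` under the distribution `μ`. -/
def probOf {T : Type} [Fintype T] (μ : T → ℝ) (P : T → Prop) : ℝ :=
  ∑ t, if P t then μ t else 0

/-- `ρ` is a stochastic choice function on the domain `𝒟`: on every menu of the domain it is
nonnegative, sums to one over the menu, and vanishes outside the menu. -/
def IsSCF {A : Type} [Fintype A] [DecidableEq A] (𝒟 : Finset (Finset A))
    (ρ : Finset A → A → ℝ) : Prop :=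
  ∀ B ∈ 𝒟, (∀ a ∈ B, 0 ≤ ρ B a) ∧ ((∑ a ∈ B, ρ B a) = 1) ∧ (∀ a ∉ B, ρ B a = 0)

/-- An aggregation correspondence for the set `AN` of non-atomic aggregates: pairwise disjoint
nonempty sets of underlying alternatives, singletons exactly on atomic aggregates. -/
structure AggCorr (A 𝒳 : Type) [Fintype A] [DecidableEq A] [Fintype 𝒳] [DecidableEq 𝒳]
    (AN : Finset A) where
  X : A → Finset 𝒳
  disj : ∀ a b, a ≠ b → Disjoint (X a) (X b)
  atomic : ∀ a ∉ AN, (X a).card = 1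
  nonatomic : ∀ a ∈ AN, 2 ≤ (X a).card

/-- `lam` is a composition distribution for the aggregation correspondence `Xc` on the domain
`𝒟`: for every menu `B ∈ 𝒟` it is a probability distribution over profiles `S` of nonempty
subsets `S a ⊆ X a`. -/
def IsCompDistr {A 𝒳 : Type} [Fintype A] [DecidableEq A] [Fintype 𝒳] [DecidableEq 𝒳]
    {AN : Finset A} (Xc : AggCorr A 𝒳 AN) (𝒟 : Finset (Finset A))
    (lam : Finset A → (A → Finset 𝒳) → ℝ) : Prop :=
  ∀ B ∈ 𝒟, IsDistr (lam B) ∧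
    ∀ S : A → Finset 𝒳, lam B S ≠ 0 → ∀ a, S a ⊆ Xc.X a ∧ (S a).Nonempty

/-- The pair `(μ, lam)` (for the aggregation correspondence `Xc`) rationalizes `ρ` on `𝒟`. -/
def Rationalizes {A 𝒳 : Type} [Fintype A] [DecidableEq A] [Fintype 𝒳] [DecidableEq 𝒳]
    {AN : Finset A} (Xc : AggCorr A 𝒳 AN) (𝒟 : Finset (Finset A))
    (μ : Ranking 𝒳 → ℝ) (lam : Finset A → (A → Finset 𝒳) → ℝ)
    (ρ : Finset A → A → ℝ) : Prop :=
  IsDistr μ ∧ IsCompDistr Xc 𝒟 lam ∧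
    ∀ B ∈ 𝒟, ∀ a ∈ B,
      ρ B a = ∑ S : A → Finset 𝒳, lam B S *
        probOf μ (fun r => ∃ x ∈ S a, ∀ b ∈ B, b ≠ a → ∀ y ∈ S b, Ranking.pref r x y)

/-- RU-rationality: some pair `(μ, lam)` for some aggregation correspondence with underlying
alternatives `𝒳` and non-atomic aggregates `AN` rationalizes `ρ`. -/
def RURational (𝒳 : Type) [Fintype 𝒳] [DecidableEq 𝒳] {A : Type} [Fintype A] [DecidableEq A]
    (AN : Finset A) (𝒟 : Finset (Finset A)) (ρ : Finset A → A → ℝ) : Prop :=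
  ∃ Xc : AggCorr A 𝒳 AN, ∃ μ lam, Rationalizes Xc 𝒟 μ lam ρ

/-- ARU-rationality: `ρ` is a random utility model over the aggregates themselves. -/
def ARURational {A : Type} [Fintype A] [DecidableEq A]
    (𝒟 : Finset (Finset A)) (ρ : Finset A → A → ℝ) : Prop :=
  ∃ μA : Ranking A → ℝ, IsDistr μA ∧
    ∀ B ∈ 𝒟, ∀ a ∈ B, ρ B a = probOf μA (fun r => ∀ b ∈ B, b ≠ a → Ranking.pref r a b)

/-- Partial RU-rationality: on menus of atomic aggregates only, `ρ` is a random utility model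
over linear orders on the atomic aggregates `AA`. -/
def PartialRURational {A : Type} [Fintype A] [DecidableEq A]
    (AA : Finset A) (𝒟 : Finset (Finset A)) (ρ : Finset A → A → ℝ) : Prop :=
  ∃ ν : Ranking {c : A // c ∈ AA} → ℝ, IsDistr ν ∧
    ∀ B ∈ 𝒟, ∀ (hB : B ⊆ AA), ∀ a, ∀ (ha : a ∈ B),
      ρ B a = probOf ν (fun r =>
        ∀ b : {c : A // c ∈ AA}, (b : A) ∈ B → (b : A) ≠ a → Ranking.pref r ⟨a, hB ha⟩ b)

/-- Limited Monotonicity (outside-option form): adding the outside option `a0` to a menu of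
atomic aggregates weakly decreases every atomic choice frequency. -/
def LimitedMono {A : Type} [Fintype A] [DecidableEq A]
    (a0 : A) (AA : Finset A) (𝒟 : Finset (Finset A)) (ρ : Finset A → A → ℝ) : Prop :=
  ∀ D : Finset A, D ⊆ AA → D ∈ 𝒟 → insert a0 D ∈ 𝒟 →
    ∀ b ∈ D, ρ (insert a0 D) b ≤ ρ D b

/-- Limited Monotonicity (general form): adding any set `E` of non-atomic aggregates to a menu
of atomic aggregates weakly decreases every atomic choice frequency. -/
def LimitedMonoGen {A : Type} [Fintype A] [DecidableEq A]
    (AA AN : Finset A) (𝒟 : Finset (Finset A)) (ρ : Finset A → A → ℝ) : Prop :=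
  ∀ D E : Finset A, D ⊆ AA → E ⊆ AN → D ∈ 𝒟 → D ∪ E ∈ 𝒟 →
    ∀ b ∈ D, ρ (D ∪ E) b ≤ ρ D b

/-- The full domain: all nonempty subsets of `A`. -/
def fullDomain (A : Type) [Fintype A] [DecidableEq A] : Finset (Finset A) :=
  Finset.univ.filter fun D => D.Nonempty

/-- The deterministic "menu-effect" stochastic choice function `ρ^≻_𝓔`: it puts probability 1
on the `r`-maximum of `D` if `a0 ∉ D` or `D ∈ E`, and probability 1 on `a0` otherwise. -/
def vertexSCF {A : Type} [Fintype A] [DecidableEq A]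
    (a0 : A) (r : Ranking A) (E : Finset (Finset A)) : Finset A → A → ℝ :=
  fun D a =>
    if h : D.Nonempty then
      if a0 ∉ D ∨ D ∈ E then (if a = Ranking.best r D h then 1 else 0)
      else (if a = a0 then 1 else 0)
    else 0

open Classical in
/-- The deterministic menu-effect stochastic choice function with multiple non-atomic
aggregates: on a menu `D` belonging to `E b` (for the necessarily unique such `b`, the
collections being pairwise disjoint) it puts probability 1 on `b`; otherwise it puts
probability 1 on the `r`-maximum of `D`. -/
def vertexSCFM {A : Type} [Fintype A] [DecidableEq A]
    (r : Ranking A) (E : A → Finset (Finset A)) : Finset A → A → ℝ :=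
  fun D a =>
    if h : D.Nonempty then
      if hex : ∃ b, D ∈ E b then (if a = Classical.choose hex then 1 else 0)
      else (if a = Ranking.best r D h then 1 else 0)
    else 0

/-- Restriction of a choice function to the coordinates `(D, a)` with `D ∈ 𝒟`, viewed as a
vector in `ℝ^(Finset A × A)`. -/
def restrictTo {A : Type} [Fintype A] [DecidableEq A] (𝒟 : Finset (Finset A))
    (ρ : Finset A → A → ℝ) : Finset A × A → ℝ :=
  fun p => if p.1 ∈ 𝒟 then ρ p.1 p.2 else 0

/-- `RU(n)` (outside-option setup): `ρ` is rationalized by some pair whose aggregation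
correspondence satisfies `|X(a0)| = n`. -/
def RUn (𝒳 : Type) [Fintype 𝒳] [DecidableEq 𝒳] {A : Type} [Fintype A] [DecidableEq A]
    (a0 : A) (𝒟 : Finset (Finset A)) (n : ℕ) (ρ : Finset A → A → ℝ) : Prop :=
  ∃ Xc : AggCorr A 𝒳 ({a0} : Finset A), (Xc.X a0).card = n ∧
    ∃ μ lam, Rationalizes Xc 𝒟 μ lam ρ

/-- `RU((n_a))`: `ρ` is rationalized by some pair whose aggregation correspondence satisfies
`|X(a)| = nv a` for every non-atomic aggregate `a`. -/
def RUvec (𝒳 : Type) [Fintype 𝒳] [DecidableEq 𝒳] {A : Type} [Fintype A] [DecidableEq A]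
    (AN : Finset A) (𝒟 : Finset (Finset A)) (nv : A → ℕ) (ρ : Finset A → A → ℝ) : Prop :=
  ∃ Xc : AggCorr A 𝒳 AN, (∀ a ∈ AN, (Xc.X a).card = nv a) ∧
    ∃ μ lam, Rationalizes Xc 𝒟 μ lam ρ

/-- `μ` is non-overlapping for `Xc`: in every ranking in the support of `μ`, the underlying
alternatives of each non-atomic aggregate occupy adjacent positions. -/
def NonOverlapping {A 𝒳 : Type} [Fintype A] [DecidableEq A] [Fintype 𝒳] [DecidableEq 𝒳]
    {AN : Finset A} (Xc : AggCorr A 𝒳 AN) (μ : Ranking 𝒳 → ℝ) : Prop :=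
  ∀ r : Ranking 𝒳, μ r ≠ 0 → ∀ a ∈ AN, ∀ y ∈ Xc.X a, ∀ z ∈ Xc.X a, ∀ x : 𝒳,
    Ranking.pref r y x → Ranking.pref r x z → x ∈ Xc.X a

/-- `lam` is menu-independent: there is a single (unconditional) probability distribution over
full profiles whose marginal on the coordinates of each menu `B ∈ 𝒟` coincides with `lam B`. -/
def MenuIndependent {A 𝒳 : Type} [Fintype A] [DecidableEq A] [Fintype 𝒳] [DecidableEq 𝒳]
    {AN : Finset A} (Xc : AggCorr A 𝒳 AN) (𝒟 : Finset (Finset A))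
    (lam : Finset A → (A → Finset 𝒳) → ℝ) : Prop :=
  ∃ lamBar : (A → Finset 𝒳) → ℝ, IsDistr lamBar ∧
    (∀ S : A → Finset 𝒳, lamBar S ≠ 0 → ∀ a, S a ⊆ Xc.X a ∧ (S a).Nonempty) ∧
    ∀ B ∈ 𝒟, ∀ S0 : A → Finset 𝒳,
      probOf (lam B) (fun S => ∀ b ∈ B, S b = S0 b)
        = probOf lamBar (fun S => ∀ b ∈ B, S b = S0 b)

/-- Squared Euclidean distance between two stochastic choice functions on the coordinates of
the domain `𝒟`. -/
def distSq {A : Type} [Fintype A] [DecidableEq A] (𝒟 : Finset (Finset A))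
    (ρ ρ' : Finset A → A → ℝ) : ℝ :=
  ∑ B ∈ 𝒟, ∑ a ∈ B, (ρ B a - ρ' B a) ^ 2

/-!
Embed `A ⊕ Fin (n - 1)` into `𝒳`: the atomic aggregate `a` consists of `inl a`, and `a0` of
`inl a0` together with one extra alternative `inr j` for each vertex `j`. On the menu `B` the
composition hides `inr j` exactly when `B ∈ 𝓔_j`, independently of the vertex. The vertex
`ρ^{≻_i}_{𝓔_i}` is then produced by a single ranking of `𝒳`: `inr i` first, the other extra
alternatives directly behind `inl a0`, and the `inl a` in the order `≻_i`. Under it, `a0` wins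
through `inr i` exactly when `a0 ∈ B ∉ 𝓔_i`, and otherwise the `≻_i`-best aggregate of `B` wins.
Mixing these rankings with the weights `w i` gives the convex combination.
-/

namespace Ranking

variable {T : Type} [Fintype T]

theorem exists_pref_of_lt {α : Type*} [LinearOrder α] (f : T → α) :
    ∃ r : Ranking T, ∀ x y, f x < f y → r.pref x y := by
  let g : T → α ×ₗ Fin (Fintype.card T) := fun x => toLex (f x, Fintype.equivFin T x)
  have hg : Function.Injective g := fun x y h =>
    (Fintype.equivFin T).injective (Prod.ext_iff.1 (toLex.injective h)).2
  let _ : LinearOrder T := LinearOrder.lift' g hg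
  let e := (Fintype.orderIsoFinOfCardEq T rfl).symm
  refine ⟨e.toEquiv, fun x y hxy => e.lt_iff_lt.2 ?_⟩
  exact Prod.Lex.toLex_lt_toLex.2 (Or.inl hxy)

def Picks {A : Type} (r : Ranking T) (S : A → Finset T) (B : Finset A) (a : A) : Prop :=
  ∃ x ∈ S a, ∀ b ∈ B, b ≠ a → ∀ y ∈ S b, r.pref x y

theorem Picks.iff_eq {A : Type} {r : Ranking T} {S : A → Finset T} {B : Finset A} {a c : A}
    (hc : r.Picks S B c) (haB : a ∈ B) (hcB : c ∈ B) : r.Picks S B a ↔ a = c := by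
  refine ⟨fun ⟨x, hx, hxbeat⟩ => ?_, fun h => h ▸ hc⟩
  obtain ⟨y, hy, hybeat⟩ := hc
  by_contra hne
  exact lt_asymm (hxbeat c hcB (Ne.symm hne) y hy) (hybeat a haB hne x hx)

variable [DecidableEq T] (r : Ranking T) {D : Finset T} (hD : D.Nonempty)

theorem best_mem : r.best D hD ∈ D := by
  obtain ⟨c, hc, hrc⟩ := mem_image.1 ((D.image fun x => r x).min'_mem (hD.image fun x => r x))
  rwa [best, ← hrc, Equiv.symm_apply_apply]

theorem pref_best {b : T} (hb : b ∈ D) (hne : b ≠ r.best D hD) : r.pref (r.best D hD) b := by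
  refine lt_of_le_of_ne ?_ fun h => hne (r.injective h).symm
  rw [best, Equiv.apply_symm_apply]
  exact min'_le _ _ (mem_image_of_mem _ hb)

end Ranking

section Mixture

variable {I T : Type} [Fintype I] [Fintype T] [DecidableEq T] (t : I → T) (w : I → ℝ)

open Classical in
theorem probOf_mixture (P : T → Prop) :
    probOf (fun s => ∑ i, if s = t i then w i else 0) P = ∑ i, w i * if P (t i) then 1 else 0 := by
  simp only [probOf, ite_sum_zero]
  rw [sum_comm]
  refine sum_congr rfl fun i _ => ?_
  rw [sum_eq_single (t i) (fun s _ hs => by simp [hs]) (by simp)]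
  simp

theorem isDistr_mixture (hw : ∀ i, 0 ≤ w i) (hw1 : ∑ i, w i = 1) :
    IsDistr fun s => ∑ i, if s = t i then w i else 0 := by
  refine ⟨fun s => sum_nonneg fun i _ => ?_, ?_⟩
  · split_ifs
    exacts [hw i, le_rfl]
  · rw [sum_comm]
    simpa using hw1

end Mixture

open Classical in
theorem exists_rationalizes_of_mixture {A 𝒳 I : Type} [Fintype A] [DecidableEq A] [Fintype 𝒳]
    [DecidableEq 𝒳] [Fintype I] {AN : Finset A} (Xc : AggCorr A 𝒳 AN) {𝒟 : Finset (Finset A)}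
    (R : I → Ranking 𝒳) {w : I → ℝ} (hw : ∀ i, 0 ≤ w i) (hw1 : ∑ i, w i = 1)
    (S : Finset A → A → Finset 𝒳) (hS : ∀ B ∈ 𝒟, ∀ a, S B a ⊆ Xc.X a ∧ (S B a).Nonempty)
    {ρ : Finset A → A → ℝ}
    (hρ : ∀ B ∈ 𝒟, ∀ a ∈ B, ρ B a = ∑ i, w i * if (R i).Picks (S B) B a then 1 else 0) :
    ∃ μ lam, Rationalizes Xc 𝒟 μ lam ρ := by
  refine ⟨_, fun B T => if T = S B then 1 else 0, isDistr_mixture R w hw hw1,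
    fun B hB => ⟨⟨fun T => ?_, by simp⟩, fun T hT => ?_⟩, fun B hB a ha => ?_⟩
  · dsimp only
    split_ifs <;> norm_num
  · obtain rfl : T = S B := by simpa using hT
    exact hS B hB
  · rw [hρ B hB a ha, sum_eq_single (S B) (fun T _ hT => by simp [hT]) (by simp)]
    simp only [if_pos, one_mul, probOf_mixture]
    rfl

theorem vertexSCF_of_nonempty {A : Type} [Fintype A] [DecidableEq A] (a0 : A) (r : Ranking A)
    (E : Finset (Finset A)) {B : Finset A} (hB : B.Nonempty) (a : A) :
    vertexSCF a0 r E B a = if a = (if a0 ∈ B ∧ B ∉ E then a0 else r.best B hB) then 1 else 0 := by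
  by_cases h : a0 ∈ B ∧ B ∉ E
  · simp [vertexSCF, hB, h]
  · rw [if_neg h, not_and_or, not_not] at *
    simp [vertexSCF, hB, h]

section OutsideOption

variable {A 𝒳 J : Type} (a0 : A)

def owner : A ⊕ J → A := Sum.elim id fun _ => a0

@[simp] theorem owner_inl (a : A) : owner (J := J) a0 (.inl a) = a := rfl

@[simp] theorem owner_inr (j : J) : owner a0 (.inr j : A ⊕ J) = a0 := rfl

def vertexKey [Fintype A] [DecidableEq J] (r : Ranking A) (i : J) : A ⊕ J → ℕ :=
  Sum.elim (fun a => 2 * r a + 1) fun j => if j = i then 0 else 2 * r a0 + 2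

variable [DecidableEq A] [Fintype J] (ι : A ⊕ J ↪ 𝒳)

def hiddenAlts (E : J → Finset (Finset A)) (B : Finset A) : Finset 𝒳 :=
  (univ.filter fun j => B ∈ E j).map (Function.Embedding.inr.trans ι)

variable [Fintype A]

def ownedAlts (a : A) : Finset 𝒳 := (univ.filter fun u => owner a0 u = a).map ι

theorem card_ownedAlts (a : A) :
    (ownedAlts a0 ι a).card = 1 + if a = a0 then Fintype.card J else 0 := by
  have hatom : (∑ b : A, if owner (J := J) a0 (.inl b) = a then 1 else 0) = 1 :=
    (sum_ite_eq' univ a fun _ => 1).trans (if_pos (mem_univ a))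
  rw [ownedAlts, card_map, card_filter, Fintype.sum_sum_type, hatom]
  by_cases ha : a = a0
  · simp [owner, ha]
  · simp [owner, ha, Ne.symm ha]

def outsideOptionCorr [Fintype 𝒳] [DecidableEq 𝒳] [Nonempty J] : AggCorr A 𝒳 {a0} where
  X := ownedAlts a0 ι
  disj a b hab := (disjoint_map ι).2 (disjoint_filter.2 fun _ _ ha hb => hab (ha ▸ hb))
  atomic a ha := by simp [card_ownedAlts, mem_singleton.not.1 ha]
  nonatomic a ha := by
    have := Fintype.card_pos (α := J)
    simp only [card_ownedAlts, mem_singleton.1 ha, if_true]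
    omega

variable [DecidableEq 𝒳]

def menuProfile (E : J → Finset (Finset A)) (B : Finset A) (a : A) : Finset 𝒳 :=
  ownedAlts a0 ι a \ hiddenAlts ι E B

variable {a0 ι} {E : J → Finset (Finset A)} {B : Finset A}

theorem inl_mem_menuProfile (a : A) : ι (.inl a) ∈ menuProfile a0 ι E B a := by
  simp [menuProfile, ownedAlts, hiddenAlts]

theorem inr_mem_menuProfile {j : J} (hj : B ∉ E j) : ι (.inr j) ∈ menuProfile a0 ι E B a0 := by
  simp [menuProfile, ownedAlts, hiddenAlts, hj]

theorem eq_of_mem_menuProfile {b : A} {y : 𝒳} (hy : y ∈ menuProfile a0 ι E B b) :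
    y = ι (.inl b) ∨ b = a0 ∧ ∃ j, B ∉ E j ∧ y = ι (.inr j) := by
  simp only [menuProfile, ownedAlts, hiddenAlts, mem_sdiff, mem_map, mem_filter, mem_univ,
    true_and] at hy
  obtain ⟨⟨u, rfl, rfl⟩, hu⟩ := hy
  cases u with
  | inl a => exact .inl rfl
  | inr j => exact .inr ⟨rfl, j, fun hj => hu ⟨j, hj, rfl⟩, rfl⟩

variable [DecidableEq J]

theorem picks_menuProfile_iff [Fintype 𝒳] {r : Ranking A} {i : J} {R : Ranking 𝒳}
    (hR : ∀ u v, vertexKey a0 r i u < vertexKey a0 r i v → R.pref (ι u) (ι v))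
    (hB : B.Nonempty) {a : A} (ha : a ∈ B) :
    R.Picks (menuProfile a0 ι E B) B a ↔ a = if a0 ∈ B ∧ B ∉ E i then a0 else r.best B hB := by
  by_cases h : a0 ∈ B ∧ B ∉ E i
  · rw [if_pos h]
    refine Ranking.Picks.iff_eq ⟨ι (.inr i), inr_mem_menuProfile h.2, ?_⟩ ha h.1
    intro b _ hb y hy
    rcases eq_of_mem_menuProfile hy with rfl | ⟨rfl, -⟩
    · exact hR _ _ (by simp [vertexKey])
    · exact absurd rfl hb
  · rw [if_neg h]
    refine Ranking.Picks.iff_eq ⟨ι (.inl _), inl_mem_menuProfile _, ?_⟩ ha (r.best_mem hB)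
    intro b hbB hb y hy
    have hlt : (r (r.best B hB) : ℕ) < r b := r.pref_best hB hbB hb
    rcases eq_of_mem_menuProfile hy with rfl | ⟨rfl, j, hj, rfl⟩
    · exact hR _ _ (by simp [vertexKey]; omega)
    · have hji : j ≠ i := by rintro rfl; exact h ⟨hbB, hj⟩
      exact hR _ _ (by simp [vertexKey, hji]; omega)

end OutsideOption

theorem stmt9_general {A 𝒳 : Type} [Fintype A] [DecidableEq A] [Fintype 𝒳] [DecidableEq 𝒳]
    (a0 : A) (n : ℕ) (hn : 2 ≤ n)
    (hX : ({a0}ᶜ : Finset A).card + n ≤ Fintype.card 𝒳)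
    (r : Fin (n - 1) → Ranking A) (E : Fin (n - 1) → Finset (Finset A))
    (w : Fin (n - 1) → ℝ) (hw : ∀ i, 0 ≤ w i) (hw1 : (∑ i, w i) = 1) :
    RUn 𝒳 a0 (fullDomain A) n
      (fun B a => ∑ i, w i * vertexSCF a0 (r i) (E i) B a) := by
  have : Nonempty (Fin (n - 1)) := ⟨⟨0, by omega⟩⟩
  obtain ⟨ι⟩ : Nonempty (A ⊕ Fin (n - 1) ↪ 𝒳) := by
    refine Function.Embedding.nonempty_of_card_le ?_
    have := Fintype.card_pos_iff.2 ⟨a0⟩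
    rw [card_compl, card_singleton] at hX
    simp only [Fintype.card_sum, Fintype.card_fin]
    omega
  choose R hR using fun i =>
    Ranking.exists_pref_of_lt (Function.extend ι (vertexKey a0 (r i) i) 0)
  refine ⟨outsideOptionCorr a0 ι, ?_, exists_rationalizes_of_mixture _ R hw hw1
    (menuProfile a0 ι E) (fun B _ a => ⟨sdiff_subset, _, inl_mem_menuProfile a⟩)
    fun B hB a ha => sum_congr rfl fun i _ => ?_⟩
  · rw [outsideOptionCorr, card_ownedAlts, if_pos rfl, Fintype.card_fin]
    omega
  · have hkey u v (h : vertexKey a0 (r i) i u < vertexKey a0 (r i) i v) :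
        (R i).pref (ι u) (ι v) :=
      hR i _ _ (by rwa [ι.injective.extend_apply, ι.injective.extend_apply])
    have hBne : B.Nonempty := (mem_filter.1 hB).2
    simp only [vertexSCF_of_nonempty a0 (r i) (E i) hBne, picks_menuProfile_iff hkey hBne ha]

/-- **Lemma 3.1**: any convex combination of `n − 1` deterministic menu-effect choice
functions `ρ^{≻_i}_{𝓔_i}` belongs to `RU(n)`. -/
theorem stmt9 {A 𝒳 : Type} [Fintype A] [DecidableEq A] [Fintype 𝒳] [DecidableEq 𝒳]
    (a0 : A) (n : ℕ) (hn : 2 ≤ n)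
    (hX : ({a0}ᶜ : Finset A).card + n ≤ Fintype.card 𝒳)
    (r : Fin (n - 1) → Ranking A) (E : Fin (n - 1) → Finset (Finset A))
    (hE : ∀ i, E i ⊆ fullDomain A)
    (w : Fin (n - 1) → ℝ) (hw : ∀ i, 0 ≤ w i) (hw1 : (∑ i, w i) = 1) :
    RUn 𝒳 a0 (fullDomain A) n
      (fun B a => ∑ i, w i * vertexSCF a0 (r i) (E i) B a) :=
  stmt9_general a0 n hn hX r E w hw hw1
end
end

section
/- Assume 𝒳 has at least |𝒜_A| + 2|𝒜_N| elements (so that an aggregation correspondence exists). A stochastic choice function ρ is rationalized by some pair (μ,λ), for some aggregation correspondence X, with μ non-overlapping, if and only if ρ is ARU-rational. -/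
/-!
If `μ` is non-overlapping, the alternatives of every aggregate form an interval of each ranking
in the support of `μ`, so these rankings order the aggregates as blocks, and `a` wins a menu,
whatever subsets `λ` draws, exactly when its block comes first. Pushing `μ` forward to this
order of blocks gives an ARU representation. Conversely, an ARU distribution is lifted to `𝒳` by
listing the blocks `X a` consecutively in the order of the aggregates, with `λ` the point mass at
the full profile `X`; the cardinality assumption is what makes some aggregation correspondence
exist.
-/

open Finset

noncomputable section

section Ranking

variable {T : Type} [Fintype T]

def Ranking.ofInjective {β : Type*} [LinearOrder β] (f : T → β) (hf : Function.Injective f) :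
    Ranking T :=
  letI : LinearOrder T := LinearOrder.lift' f hf
  (Fintype.orderIsoFinOfCardEq T rfl).symm.toEquiv

theorem Ranking.pref_ofInjective {β : Type*} [LinearOrder β] {f : T → β}
    (hf : Function.Injective f) (x y : T) : (Ranking.ofInjective f hf).pref x y ↔ f x < f y :=
  letI : LinearOrder T := LinearOrder.lift' f hf
  (Fintype.orderIsoFinOfCardEq T rfl).symm.lt_iff_lt

def Ranking.OrdConnected (r : Ranking T) (s : Finset T) : Prop :=
  ∀ y ∈ s, ∀ z ∈ s, ∀ x, r.pref y x → r.pref x z → x ∈ s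

theorem Ranking.pref_of_ordConnected {r : Ranking T} {s t : Finset T}
    (hst : Disjoint s t) (hs : r.OrdConnected s) (ht : r.OrdConnected t)
    {u₀ v₀ : T} (hu₀ : u₀ ∈ s) (hv₀ : v₀ ∈ t) (h₀ : r.pref u₀ v₀)
    {u v : T} (hu : u ∈ s) (hv : v ∈ t) : r.pref u v := by
  by_contra hvu
  have hvu : r v < r u := lt_of_le_of_ne (not_lt.1 hvu) fun h => disjoint_left.1 hst hu
    (r.injective h ▸ hv)
  rcases lt_trichotomy (r v) (r u₀) with h | h | h
  · exact disjoint_left.1 hst hu₀ (ht v hv v₀ hv₀ u₀ h h₀)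
  · exact disjoint_left.1 hst hu₀ (r.injective h ▸ hv)
  · exact disjoint_left.1 hst (hs u₀ hu₀ u hu v h hvu) hv

end Ranking

section Distributions

variable {T U : Type} [Fintype T]

open Classical in
def pushforward (g : T → U) (μ : T → ℝ) : U → ℝ :=
  fun u => ∑ t ∈ univ.filter fun t => g t = u, μ t

theorem IsDistr.pushforward [Fintype U] {μ : T → ℝ} (hμ : IsDistr μ) (g : T → U) :
    IsDistr (pushforward g μ) := by
  classical
  refine ⟨fun u => sum_nonneg fun t _ => hμ.1 t, ?_⟩
  rw [← hμ.2]
  exact sum_fiberwise_of_maps_to (fun t _ => mem_univ (g t)) μ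

theorem exists_eq_of_pushforward_ne_zero {g : T → U} {μ : T → ℝ} {u : U}
    (h : pushforward g μ u ≠ 0) : ∃ t, g t = u := by
  classical
  obtain ⟨t, ht, -⟩ := exists_ne_zero_of_sum_ne_zero h
  exact ⟨t, (mem_filter.1 ht).2⟩

theorem probOf_pushforward [Fintype U] (g : T → U) (μ : T → ℝ) (P : U → Prop) :
    probOf (pushforward g μ) P = probOf μ (fun t => P (g t)) := by
  classical
  unfold probOf pushforward
  dsimp only
  rw [← sum_fiberwise_of_maps_to (fun t (_ : t ∈ univ) => mem_univ (g t))]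
  refine sum_congr rfl fun u _ => ?_
  by_cases hP : P u
  · rw [if_pos hP]
    exact sum_congr rfl fun t ht => (if_pos (by rwa [(mem_filter.1 ht).2])).symm
  · rw [if_neg hP]
    exact (sum_eq_zero fun t ht => if_neg (by rwa [(mem_filter.1 ht).2])).symm

theorem isDistr_pi_single [DecidableEq T] (t : T) : IsDistr (Pi.single t 1 : T → ℝ) := by
  refine ⟨fun s => ?_, by rw [sum_pi_single', if_pos (mem_univ t)]⟩
  rw [Pi.single_apply]
  split_ifs <;> norm_num

theorem probOf_congr_of_ne_zero {μ : T → ℝ} {P Q : T → Prop}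
    (h : ∀ t, μ t ≠ 0 → (P t ↔ Q t)) : probOf μ P = probOf μ Q := by
  classical
  unfold probOf
  refine sum_congr rfl fun t _ => ?_
  by_cases ht : μ t = 0
  · simp [ht]
  · simp only [h t ht]

end Distributions

namespace AggCorr

variable {A 𝒳 : Type} [Fintype A] [DecidableEq A] [Fintype 𝒳] [DecidableEq 𝒳] {AN : Finset A}
  (Xc : AggCorr A 𝒳 AN)

theorem nonempty_X (a : A) : (Xc.X a).Nonempty := by
  rw [← card_pos]
  by_cases ha : a ∈ AN
  · exact lt_of_lt_of_le two_pos (Xc.nonatomic a ha)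
  · rw [Xc.atomic a ha]
    exact one_pos

theorem eq_of_mem_X {a b : A} {x : 𝒳} (ha : x ∈ Xc.X a) (hb : x ∈ Xc.X b) : a = b := by
  by_contra hab
  exact disjoint_left.1 (Xc.disj a b hab) ha hb

def pick (a : A) : 𝒳 := (Xc.nonempty_X a).choose

theorem pick_mem (a : A) : Xc.pick a ∈ Xc.X a := (Xc.nonempty_X a).choose_spec

theorem pick_injective : Function.Injective Xc.pick := fun a b h =>
  Xc.eq_of_mem_X (Xc.pick_mem a) (h ▸ Xc.pick_mem b)

theorem ordConnected_X_of_nonOverlapping {μ : Ranking 𝒳 → ℝ} (hno : NonOverlapping Xc μ)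
    {r : Ranking 𝒳} (hr : μ r ≠ 0) (a : A) : r.OrdConnected (Xc.X a) := by
  by_cases ha : a ∈ AN
  · exact hno r hr a ha
  · intro y hy z hz x hyx hxz
    obtain ⟨w, hw⟩ := card_eq_one.1 (Xc.atomic a ha)
    rw [hw, mem_singleton] at hy hz
    subst hy hz
    exact absurd (lt_trans hyx hxz) (lt_irrefl _)

/-- When every block `X c` is an interval of `r`, whether some element of `S a` beats every
element of the other `S b` depends only on the relative order of the blocks. -/
theorem exists_pref_iff_pick_pref {r : Ranking 𝒳} (hr : ∀ c, r.OrdConnected (Xc.X c))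
    {S : A → Finset 𝒳} (hS : ∀ c, S c ⊆ Xc.X c ∧ (S c).Nonempty) (B : Finset A) (a : A) :
    (∃ x ∈ S a, ∀ b ∈ B, b ≠ a → ∀ y ∈ S b, r.pref x y) ↔
      ∀ b ∈ B, b ≠ a → r.pref (Xc.pick a) (Xc.pick b) := by
  have hblock : ∀ {b}, b ≠ a → ∀ {x x' y y'}, x ∈ Xc.X a → x' ∈ Xc.X a → y ∈ Xc.X b →
      y' ∈ Xc.X b → r.pref x y → r.pref x' y' := fun hba _ _ _ _ hx hx' hy hy' h =>
    r.pref_of_ordConnected (Xc.disj _ _ hba.symm) (hr _) (hr _) hx hy h hx' hy'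
  constructor
  · rintro ⟨x, hx, hbest⟩ b hb hba
    obtain ⟨y, hy⟩ := (hS b).2
    exact hblock hba ((hS a).1 hx) (Xc.pick_mem a) ((hS b).1 hy) (Xc.pick_mem b)
      (hbest b hb hba y hy)
  · intro h
    obtain ⟨x, hx⟩ := (hS a).2
    exact ⟨x, hx, fun b hb hba y hy => hblock hba (Xc.pick_mem a) ((hS a).1 hx)
      (Xc.pick_mem b) ((hS b).1 hy) (h b hb hba)⟩

theorem aruRational_of_nonOverlapping {𝒟 : Finset (Finset A)} {ρ : Finset A → A → ℝ}
    {μ : Ranking 𝒳 → ℝ} {lam : Finset A → (A → Finset 𝒳) → ℝ}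
    (hrat : Rationalizes Xc 𝒟 μ lam ρ) (hno : NonOverlapping Xc μ) : ARURational 𝒟 ρ := by
  obtain ⟨hμ, hlam, hrep⟩ := hrat
  let restrict : Ranking 𝒳 → Ranking A := fun r =>
    Ranking.ofInjective (fun a => r (Xc.pick a)) (r.injective.comp Xc.pick_injective)
  refine ⟨pushforward restrict μ, hμ.pushforward restrict, fun B hB a ha => ?_⟩
  let chosen : Ranking 𝒳 → Prop := fun r => ∀ b ∈ B, b ≠ a → (restrict r).pref a b
  have hevent : ∀ S, lam B S ≠ 0 →
      probOf μ (fun r => ∃ x ∈ S a, ∀ b ∈ B, b ≠ a → ∀ y ∈ S b, r.pref x y) =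
        probOf μ chosen := fun S hS =>
    probOf_congr_of_ne_zero fun r hr =>
      (Xc.exists_pref_iff_pick_pref (Xc.ordConnected_X_of_nonOverlapping hno hr)
        ((hlam B hB).2 S hS) B a).trans <| by
          simp only [chosen, restrict, Ranking.pref_ofInjective]
          rfl
  rw [hrep B hB a ha, probOf_pushforward]
  calc _ = ∑ S, lam B S * probOf μ chosen := sum_congr rfl fun S _ => by
          by_cases hS : lam B S = 0
          · rw [hS, zero_mul, zero_mul]
          · rw [hevent S hS]
    _ = probOf μ chosen := by rw [← sum_mul, (hlam B hB).1.2, one_mul]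

variable (rA : Ranking A)

/-- The `rA`-position of the block containing `x`, and `Fintype.card A` if `x` lies in no block. -/
def blockRank (x : 𝒳) : ℕ :=
  if h : ∃ a, x ∈ Xc.X a then rA h.choose else Fintype.card A

theorem blockRank_of_mem {a : A} {x : 𝒳} (hx : x ∈ Xc.X a) : Xc.blockRank rA x = rA a := by
  have h : ∃ a, x ∈ Xc.X a := ⟨a, hx⟩
  rw [blockRank, dif_pos h, Xc.eq_of_mem_X h.choose_spec hx]

theorem mem_of_blockRank_eq {a : A} {x : 𝒳} (h : Xc.blockRank rA x = rA a) : x ∈ Xc.X a := by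
  unfold blockRank at h
  split_ifs at h with hx
  · exact rA.injective (Fin.val_injective h) ▸ hx.choose_spec
  · exact absurd h (rA a).isLt.ne'

def blockKey (x : 𝒳) : ℕ ×ₗ ℕ := toLex (Xc.blockRank rA x, (Fintype.equivFin 𝒳 x : ℕ))

theorem blockKey_injective : Function.Injective (Xc.blockKey rA) := fun _ _ h =>
  (Fintype.equivFin 𝒳).injective (Fin.val_injective (Prod.ext_iff.1 (toLex.injective h)).2)

def blockLift : Ranking 𝒳 := Ranking.ofInjective (Xc.blockKey rA) (Xc.blockKey_injective rA)

theorem blockLift_pref_iff_blockRank {x y : 𝒳} :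
    (Xc.blockLift rA).pref x y ↔ Xc.blockRank rA x < Xc.blockRank rA y ∨
      Xc.blockRank rA x = Xc.blockRank rA y ∧ Fintype.equivFin 𝒳 x < Fintype.equivFin 𝒳 y :=
  (Ranking.pref_ofInjective _ x y).trans Prod.Lex.toLex_lt_toLex

theorem blockLift_pref_iff {a b : A} (hab : a ≠ b) {x y : 𝒳} (hx : x ∈ Xc.X a)
    (hy : y ∈ Xc.X b) : (Xc.blockLift rA).pref x y ↔ rA.pref a b := by
  have hne : (rA a : ℕ) ≠ rA b := fun h => hab (rA.injective (Fin.val_injective h))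
  rw [blockLift_pref_iff_blockRank, Xc.blockRank_of_mem rA hx, Xc.blockRank_of_mem rA hy,
    Ranking.pref]
  simp only [hne, false_and, or_false, Fin.lt_def]

theorem ordConnected_blockLift (a : A) : (Xc.blockLift rA).OrdConnected (Xc.X a) := by
  intro y hy z hz x hyx hxz
  rw [blockLift_pref_iff_blockRank, Xc.blockRank_of_mem rA hy] at hyx
  rw [blockLift_pref_iff_blockRank, Xc.blockRank_of_mem rA hz] at hxz
  exact Xc.mem_of_blockRank_eq rA (by omega)

theorem exists_nonOverlapping_of_aruRational {𝒟 : Finset (Finset A)} {ρ : Finset A → A → ℝ}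
    (h : ARURational 𝒟 ρ) : ∃ μ lam, Rationalizes Xc 𝒟 μ lam ρ ∧ NonOverlapping Xc μ := by
  obtain ⟨μA, hμA, hARU⟩ := h
  refine ⟨pushforward Xc.blockLift μA, fun _ => Pi.single Xc.X 1,
    ⟨hμA.pushforward _, fun _ _ => ⟨isDistr_pi_single Xc.X, fun S hS c => ?_⟩,
      fun B hB a ha => ?_⟩, fun r hr a _ => ?_⟩
  · obtain rfl : S = Xc.X := by
      by_contra hne
      exact hS (Pi.single_eq_of_ne hne 1)
    exact ⟨subset_rfl, Xc.nonempty_X c⟩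
  · dsimp only
    rw [hARU B hB a ha, sum_eq_single_of_mem Xc.X (mem_univ _)
      fun S _ hne => by rw [Pi.single_eq_of_ne hne, zero_mul],
      Pi.single_eq_same, one_mul, probOf_pushforward]
    refine congrArg (probOf μA) (funext fun rA => propext ?_)
    rw [Xc.exists_pref_iff_pick_pref (Xc.ordConnected_blockLift rA)
      (fun c => ⟨subset_rfl, Xc.nonempty_X c⟩)]
    exact forall₂_congr fun b _ => imp_congr_right fun hba =>
      (Xc.blockLift_pref_iff rA (Ne.symm hba) (Xc.pick_mem a) (Xc.pick_mem b)).symm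
  · obtain ⟨rA, rfl⟩ := exists_eq_of_pushforward_ne_zero hr
    exact Xc.ordConnected_blockLift rA a

end AggCorr

theorem AggCorr.nonempty_of_card_le {A 𝒳 : Type} [Fintype A] [DecidableEq A] [Fintype 𝒳]
    [DecidableEq 𝒳] {AN : Finset A} (hX : (ANᶜ : Finset A).card + 2 * AN.card ≤ Fintype.card 𝒳) :
    Nonempty (AggCorr A 𝒳 AN) := by
  let n : A → ℕ := fun a => if a ∈ AN then 2 else 1
  have hcard : Fintype.card (Σ a, Fin (n a)) ≤ Fintype.card 𝒳 := by
    rw [Fintype.card_sigma, ← sum_add_sum_compl AN]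
    simp only [Fintype.card_fin, n]
    rw [sum_ite_of_true fun a ha => ha, sum_ite_of_false fun a ha => mem_compl.1 ha]
    simp only [sum_const, smul_eq_mul, mul_one]
    omega
  obtain ⟨g⟩ := Function.Embedding.nonempty_of_card_le hcard
  let X : A → Finset 𝒳 := fun a => univ.map ((Function.Embedding.sigmaMk a).trans g)
  have hcardX : ∀ a, (X a).card = n a := fun a => by simp [X]
  refine ⟨⟨X, fun a b hab => disjoint_left.2 fun x hxa hxb => ?_,
    fun a ha => by simp [hcardX, n, ha], fun a ha => by simp [hcardX, n, ha]⟩⟩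
  obtain ⟨i, -, rfl⟩ := mem_map.1 hxa
  obtain ⟨j, -, hj⟩ := mem_map.1 hxb
  exact hab (congrArg Sigma.fst (g.injective hj)).symm

theorem stmt11_general {A 𝒳 : Type} [Fintype A] [DecidableEq A] [Fintype 𝒳] [DecidableEq 𝒳]
    (AN : Finset A) (𝒟 : Finset (Finset A))
    (hX : (ANᶜ : Finset A).card + 2 * AN.card ≤ Fintype.card 𝒳)
    (ρ : Finset A → A → ℝ) :
    (∃ Xc : AggCorr A 𝒳 AN, ∃ μ lam,
        Rationalizes Xc 𝒟 μ lam ρ ∧ NonOverlapping Xc μ) ↔ ARURational 𝒟 ρ := by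
  obtain ⟨Xc⟩ := AggCorr.nonempty_of_card_le hX
  exact ⟨fun ⟨Xc', _, _, hrat, hno⟩ => Xc'.aruRational_of_nonOverlapping hrat hno,
    fun h => ⟨Xc, Xc.exists_nonOverlapping_of_aruRational h⟩⟩

/-- **Proposition 4.1**: `ρ` is rationalized by some pair `(μ, λ)` with `μ` non-overlapping
iff `ρ` is ARU-rational. -/
theorem stmt11 {A 𝒳 : Type} [Fintype A] [DecidableEq A] [Fintype 𝒳] [DecidableEq 𝒳]
    (AN : Finset A) (𝒟 : Finset (Finset A)) (h𝒟 : ∀ B ∈ 𝒟, B.Nonempty)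
    (hX : (ANᶜ : Finset A).card + 2 * AN.card ≤ Fintype.card 𝒳)
    (ρ : Finset A → A → ℝ) (hρ : IsSCF 𝒟 ρ) :
    (∃ Xc : AggCorr A 𝒳 AN, ∃ μ lam,
        Rationalizes Xc 𝒟 μ lam ρ ∧ NonOverlapping Xc μ) ↔ ARURational 𝒟 ρ :=
  stmt11_general AN 𝒟 hX ρ
end
end
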